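/- arXiv:2303.17524 — 6 statements merged into one kernel-verified Lean document; each statement's English description precedes it below -/
import Mathlib

section
/- Suppose (X, B) is a t-uniform set system with |X| = k such that for any r blocks B₁,...,B_r ∈ B one has |B₁ ∪ ... ∪ B_r| < k, and rt ≥ k. Then |B| ≤ C(k-1, t). -/
/-!
Katona's circle method. Place `X` on a circle by a numbering `f : X ≃ Fin k` and call the `t`
consecutive positions starting at `a` an arc. If more than `k - t` arcs of one numbering were
blocks, fewer than `t` starting positions would be missing, and then `⌈k / t⌉ ≤ r` of the block
arcs would already cover the circle, contradicting the hypothesis. Each `t`-set is an arc of exactly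
`k · t! (k - t)!` pairs (numbering, start), so counting these pairs gives
`|B| · k · t! (k - t)! ≤ k! (k - t)`, i.e. `|B| ≤ C(k - 1, t)`.
-/

open Finset
open scoped Nat

namespace Fin

open Fin.NatCast

variable {n : ℕ} [NeZero n]

theorem exists_mem_add_one_notMem {S : Finset (Fin n)} (hS : S.Nonempty) (hSu : S ≠ univ) :
    ∃ y ∈ S, y + 1 ∉ S := by
  by_contra! h
  obtain ⟨y, hy⟩ := hS
  have hadd : ∀ m : ℕ, y + (m : Fin n) ∈ S := by
    intro m
    induction m with
    | zero => simpa using hy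
    | succ m ih => simpa [← add_assoc] using h _ ih
  exact hSu (eq_univ_of_forall fun z => by simpa using hadd (z - y).val)

theorem card_add_le_card_of_add_mem {S D : Finset (Fin n)} {e : ℕ} (hS : S.Nonempty)
    (hD : D ≠ univ) (h : ∀ y ∈ S, ∀ δ ≤ e, y + (δ : Fin n) ∈ D) : #S + e ≤ #D := by
  have hSD : S ⊆ D := fun y hy => by simpa using h y hy 0 (Nat.zero_le e)
  induction e generalizing S with
  | zero => simpa using card_le_card hSD
  | succ e ih =>
    obtain ⟨y, hy, hy1⟩ :=
      exists_mem_add_one_notMem hS fun hS' => hD (univ_subset_iff.1 (hS' ▸ hSD))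
    have hS₁ : ∀ z ∈ insert (y + 1) S, ∀ δ ≤ e, z + (δ : Fin n) ∈ D := by
      intro z hz δ hδ
      rcases mem_insert.1 hz with rfl | hz
      · have := h y hy (δ + 1) (by omega)
        rwa [Nat.cast_succ, add_comm (δ : Fin n), ← add_assoc] at this
      · exact h z hz δ (by omega)
    have hy1D : y + 1 ∈ D := by simpa using hS₁ _ (mem_insert_self _ _) 0 (Nat.zero_le _)
    have := ih (insert_nonempty _ _) hS₁ (insert_subset hy1D hSD)
    rw [card_insert_of_notMem hy1] at this
    omega

theorem val_sub_add_natCast {x y : Fin n} {s : ℕ} (hs : s ≤ (y - x).val) :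
    (y - (x + (s : Fin n))).val = (y - x).val - s := by
  have hsn : s < n := hs.trans_lt (y - x).isLt
  rw [← sub_sub, coe_sub_iff_le.2 (by simpa [le_iff_val_le_val, Nat.mod_eq_of_lt hsn] using hs)]
  simp [Nat.mod_eq_of_lt hsn]

/- The arcs of length `c` at `x + j c` (`j < q`) cover `[x, x + q c)` and one at `x + s` covers the
rest. At most `q · #Aᶜ` starts fail the first condition (union bound); if all other starts failed
the second one, shifting them by `n - c` would give a set `S` with `S + [0, q c + c - n] ⊆ Aᶜ`, and
the resulting bound on `#S` leaves fewer than `n` starts in total. -/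
theorem exists_start_of_card_compl_lt {A : Finset (Fin n)} {c q : ℕ} (hA : A.Nonempty)
    (hAc : #Aᶜ < c) (hqc : q * c < n) (hqn : n ≤ q * c + c) :
    ∃ x : Fin n, (∀ j < q, x + ((j * c : ℕ) : Fin n) ∈ A) ∧
      ∃ s, n - c ≤ s ∧ s ≤ q * c ∧ x + (s : Fin n) ∈ A := by
  set F : Finset (Fin n) := {x | ∀ j < q, x + ((j * c : ℕ) : Fin n) ∈ A}
  have hFc : #Fᶜ ≤ q * #Aᶜ := by
    calc #Fᶜ ≤ #((range q).biUnion fun j => Aᶜ.image (· - ((j * c : ℕ) : Fin n))) := by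
          refine card_le_card fun x hx => ?_
          obtain ⟨j, hj, hjA⟩ : ∃ j < q, x + ((j * c : ℕ) : Fin n) ∉ A := by
            simpa [F] using hx
          exact mem_biUnion.2 ⟨j, mem_range.2 hj, mem_image.2 ⟨_, mem_compl.2 hjA, by simp⟩⟩
      _ ≤ ∑ j ∈ range q, #(Aᶜ.image (· - ((j * c : ℕ) : Fin n))) := card_biUnion_le
      _ ≤ ∑ _j ∈ range q, #Aᶜ := sum_le_sum fun _ _ => card_image_le
      _ = q * #Aᶜ := by simp
  have hqA := Nat.mul_le_mul_left q (show #Aᶜ + 1 ≤ c from hAc)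
  have hFF := card_add_card_compl F
  rw [Fintype.card_fin] at hFF
  by_contra! hbad
  have hF : F.Nonempty := card_pos.1 (by rw [mul_add] at hqA; omega)
  have hgap := card_add_le_card_of_add_mem (hF.image (· + ↑(n - c))) (D := Aᶜ)
    (e := q * c - (n - c)) (by simpa using hA.ne_empty) (by
      intro y hy δ hδ
      obtain ⟨x, hx, rfl⟩ := mem_image.1 hy
      simpa [add_assoc] using hbad x (mem_filter.1 hx).2 (n - c + δ) (by omega) (by omega))
  rw [card_image_of_injective _ (add_left_injective _)] at hgap
  have hAn := (card_compl_lt_iff_nonempty A).2 hA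
  rw [mul_add] at hqA
  rw [Fintype.card_fin] at hAn
  omega

theorem exists_cover_of_card_compl_lt {A : Finset (Fin n)} {c r : ℕ} (hA : A.Nonempty)
    (hAc : #Aᶜ < c) (hn : n ≤ r * c) :
    ∃ p : Fin r → Fin n, (∀ j, p j ∈ A) ∧ ∀ y, ∃ j, (y - p j).val < c := by
  have hc : 0 < c := by omega
  obtain ⟨q, hqc, hqn⟩ : ∃ q, q * c < n ∧ n ≤ q * c + c :=
    ⟨(n - 1) / c, by have := Nat.div_mul_le_self (n - 1) c; have := NeZero.pos n; omega,
      by have := Nat.lt_div_mul_add (a := n - 1) hc; omega⟩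
  have hqr : q < r := lt_of_mul_lt_mul_right (hqc.trans_le hn) (Nat.zero_le c)
  obtain ⟨x, hxA, s, hs₁, hs₂, hsA⟩ := exists_start_of_card_compl_lt hA hAc hqc hqn
  refine ⟨fun j => if j.val < q then x + ↑(j.val * c) else x + ↑s, fun j => ?_, fun y => ?_⟩
  · dsimp only
    split_ifs with h
    exacts [hxA _ h, hsA]
  have hm := (y - x).isLt
  by_cases hmq : (y - x).val < q * c
  · have hj : (y - x).val / c < q := (Nat.div_lt_iff_lt_mul hc).2 hmq
    refine ⟨⟨_, hj.trans hqr⟩, ?_⟩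
    simp only [hj, if_true]
    rw [val_sub_add_natCast (Nat.div_mul_le_self _ c)]
    have := Nat.lt_div_mul_add (a := (y - x).val) hc
    omega
  · refine ⟨⟨q, hqr⟩, ?_⟩
    simp only [lt_irrefl, if_false]
    rw [val_sub_add_natCast (show s ≤ (y - x).val by omega)]
    omega

end Fin

namespace Numbering

variable {X : Type*} [Fintype X] [NeZero (Fintype.card X)] {t : ℕ}

/-- Subtraction in `Fin` wraps around, so this is a set of `t` consecutive positions on a circle. -/
def arc (f : Numbering X) (t : ℕ) (a : Fin (Fintype.card X)) : Finset X :=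
  {x | (f x - a).val < t}

theorem arc_zero_eq_iff_isPrefix {f : Numbering X} {s : Finset X} :
    arc f #s 0 = s ↔ f.IsPrefix s := by
  simp [arc, IsPrefix, Finset.ext_iff, iff_comm]

theorem arc_trans_subRight (f : Numbering X) (a : Fin (Fintype.card X)) :
    arc (f.trans (Equiv.subRight a)) t 0 = arc f t a := by
  ext; simp [arc]

variable [DecidableEq X] {B : Finset (Finset X)}

theorem card_filter_arc_mem (huniform : ∀ b ∈ B, #b = t) (a : Fin (Fintype.card X)) :
    #{f : Numbering X | arc f t a ∈ B} = #B * (t ! * (Fintype.card X - t)!) := by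
  calc #{f : Numbering X | arc f t a ∈ B}
      = #{f : Numbering X | arc f t 0 ∈ B} :=
        card_equiv ((Equiv.refl X).equivCongr (Equiv.subRight a)) fun f => by
          simp [← arc_trans_subRight f a]
    _ = ∑ b ∈ B, #(prefixed b) := by
        rw [card_eq_sum_card_fiberwise (f := fun f : Numbering X => arc f t 0) (t := B)
          (s := {f | arc f t 0 ∈ B}) fun f hf => by simpa using hf]
        refine sum_congr rfl fun b hb => congrArg card (Finset.ext fun f => ?_)
        simp only [mem_filter, mem_univ, true_and, mem_prefixed, ← arc_zero_eq_iff_isPrefix,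
          huniform b hb]
        exact and_iff_right_of_imp fun h => h ▸ hb
    _ = #B * (t ! * (Fintype.card X - t)!) := by
        rw [sum_congr rfl fun b hb => by rw [card_prefixed, huniform b hb], sum_const, smul_eq_mul]

theorem card_filter_arc_mem_le {r : ℕ} (hrt : Fintype.card X ≤ r * t)
    (hunion : ∀ g : Fin r → Finset X, (∀ i, g i ∈ B) → #(univ.sup g) < Fintype.card X)
    (f : Numbering X) : #{a | arc f t a ∈ B} ≤ Fintype.card X - t := by
  by_contra! h
  set A : Finset (Fin (Fintype.card X)) := {a | arc f t a ∈ B}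
  have hAA := card_add_card_compl A
  rw [Fintype.card_fin] at hAA
  obtain ⟨p, hpA, hcov⟩ :=
    Fin.exists_cover_of_card_compl_lt (A := A) (card_pos.1 (by omega)) (by omega) hrt
  refine (hunion (fun j => arc f t (p j)) fun j => (mem_filter.1 (hpA j)).2).ne ?_
  have hsup : univ.sup (fun j => arc f t (p j)) = univ := eq_univ_of_forall fun x => by
    obtain ⟨j, hj⟩ := hcov (f x)
    exact mem_sup.2 ⟨j, mem_univ _, by simpa [arc] using hj⟩
  rw [hsup, card_univ]

theorem card_mul_le_of_card_filter_arc_mem_le (huniform : ∀ b ∈ B, #b = t) {m : ℕ}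
    (hbound : ∀ f : Numbering X, #{a | arc f t a ∈ B} ≤ m) :
    #B * (t ! * (Fintype.card X - t)!) * Fintype.card X ≤ (Fintype.card X)! * m := by
  calc #B * (t ! * (Fintype.card X - t)!) * Fintype.card X
      = ∑ a : Fin (Fintype.card X), #{f : Numbering X | arc f t a ∈ B} := by
        simp [card_filter_arc_mem huniform, mul_comm]
    _ = ∑ f : Numbering X, #{a | arc f t a ∈ B} :=
        sum_card_bipartiteAbove_eq_sum_card_bipartiteBelow _
    _ ≤ ∑ _f : Numbering X, m := sum_le_sum fun f _ => hbound f
    _ = (Fintype.card X)! * m := by simp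

end Numbering

theorem Nat.le_choose_sub_one_of_mul_le {N k t : ℕ} (hk : 0 < k) (htk : t ≤ k)
    (h : N * (t ! * (k - t)!) * k ≤ k ! * (k - t)) : N ≤ (k - 1).choose t := by
  obtain ⟨k, rfl⟩ : ∃ k', k = k' + 1 := ⟨k - 1, by omega⟩
  have hpos : 0 < t ! * (k + 1 - t)! * (k + 1) := by positivity
  refine Nat.le_of_mul_le_mul_right ?_ hpos
  calc N * (t ! * (k + 1 - t)! * (k + 1)) ≤ (k + 1)! * (k + 1 - t) := by
        simpa [mul_assoc] using h
    _ = (k + 1).choose t * (k + 1 - t) * (t ! * (k + 1 - t)!) := by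
        rw [← Nat.choose_mul_factorial_mul_factorial htk]; ring
    _ = k.choose t * (t ! * (k + 1 - t)! * (k + 1)) := by
        rw [← Nat.choose_mul_succ_eq]; ring

theorem frankl_lemma_general {X : Type} [Fintype X] [DecidableEq X] (t r k : ℕ)
    (hk : Fintype.card X = k)
    (B : Finset (Finset X)) (huniform : ∀ b ∈ B, b.card = t)
    (hunion : ∀ f : Fin r → Finset X, (∀ i, f i ∈ B) → (Finset.univ.sup f).card < k)
    (hrt : k ≤ r * t) :
    B.card ≤ (k - 1).choose t := by
  subst hk
  obtain rfl | ⟨b₀, hb₀⟩ := B.eq_empty_or_nonempty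
  · simp
  have hX : 0 < Fintype.card X := Nat.zero_lt_of_lt (hunion (fun _ => b₀) fun _ => hb₀)
  have : NeZero (Fintype.card X) := ⟨hX.ne'⟩
  exact Nat.le_choose_sub_one_of_mul_le hX (huniform b₀ hb₀ ▸ card_le_univ b₀)
    (Numbering.card_mul_le_of_card_filter_arc_mem_le huniform
      (Numbering.card_filter_arc_mem_le hrt hunion))

/-- Frankl's lemma: if `(X, B)` is a `t`-uniform set system with `|X| = k` such that
any `r` blocks have union of size `< k`, and `r*t ≥ k`, then `|B| ≤ C(k-1, t)`. -/
theorem frankl_lemma {X : Type} [Fintype X] [DecidableEq X] (t r k : ℕ)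
    (ht : 0 < t) (hr : 0 < r) (hk : Fintype.card X = k)
    (B : Finset (Finset X)) (huniform : ∀ b ∈ B, b.card = t)
    (hunion : ∀ f : Fin r → Finset X, (∀ i, f i ∈ B) → (Finset.univ.sup f).card < k)
    (hrt : k ≤ r * t) :
    B.card ≤ (k - 1).choose t :=
  frankl_lemma_general t r k hk B huniform hunion hrt
end

section
/- If there exists a t-(v, k, 1) packing design with b blocks and r = ⌊(k - d - 1)/(t - 1)⌋ ≥ 1, then this set system is an (r; d)-cover-free family with ground set size v and b blocks. -/
open Finset


/-- A set system `F` on `X` is a `(w,r;d)`-cover-free family. -/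
def IsCFF {X : Type} [Fintype X] [DecidableEq X] (w r d : ℕ) (F : Finset (Finset X)) : Prop :=
  ∀ WS RS : Finset (Finset X), WS ⊆ F → RS ⊆ F → WS.card = w → RS.card = r →
    Disjoint WS RS → d < ((WS.inf id) \ (RS.sup id)).card

/-- A `t-(v,k,λ)` packing design: every block has size `k` and every `t`-subset of
points lies in at most `λ` blocks. -/
def IsPacking {X : Type} [DecidableEq X] (t k lam : ℕ) (B : Finset (Finset X)) : Prop :=
  (∀ b ∈ B, b.card = k) ∧
  ∀ S : Finset X, S.card = t → (B.filter (fun b => S ⊆ b)).card ≤ lam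

/-!
Two distinct blocks of a `t-(v,k,1)` packing share fewer than `t` points, so `r` blocks other
than `B₀` cover at most `r (t - 1) ≤ k - d - 1` points of `B₀`, leaving more than `d` uncovered.
-/

variable {X : Type} [DecidableEq X]

theorem IsPacking.card_inter_lt {t k : ℕ} {B : Finset (Finset X)} (hpack : IsPacking t k 1 B)
    {b₁ b₂ : Finset X} (h₁ : b₁ ∈ B) (h₂ : b₂ ∈ B) (hne : b₁ ≠ b₂) : #(b₁ ∩ b₂) < t := by
  by_contra! h
  obtain ⟨S, hS, hSt⟩ := exists_subset_card_eq h
  have hpair : {b₁, b₂} ⊆ B.filter (S ⊆ ·) := by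
    simp only [insert_subset_iff, singleton_subset_iff, mem_filter]
    exact ⟨⟨h₁, hS.trans inter_subset_left⟩, h₂, hS.trans inter_subset_right⟩
  have := (card_le_card hpair).trans (hpack.2 S hSt)
  rw [card_pair hne] at this
  omega

theorem card_inter_sup_le {w : Finset X} {A : Finset (Finset X)} {m : ℕ}
    (h : ∀ a ∈ A, #(w ∩ a) ≤ m) : #(w ∩ A.sup id) ≤ #A * m :=
  calc #(w ∩ A.sup id) = #(A.biUnion (w ∩ ·)) := by
        rw [← inf_eq_inter, sup_inf_distrib_left, sup_eq_biUnion]; rfl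
    _ ≤ ∑ a ∈ A, #(w ∩ a) := card_biUnion_le
    _ ≤ #A * m := sum_le_card_nsmul A _ m h

theorem isCFF_one_of_card_inter_le [Fintype X] {B : Finset (Finset X)} {k m r d : ℕ}
    (hcard : ∀ b ∈ B, #b = k)
    (hinter : ∀ b₁ ∈ B, ∀ b₂ ∈ B, b₁ ≠ b₂ → #(b₁ ∩ b₂) ≤ m) (hk : d + r * m < k) :
    IsCFF 1 r d B := by
  intro WS RS hWS hRS hWScard hRScard hdisj
  obtain ⟨w, rfl⟩ := card_eq_one.mp hWScard
  have hw : w ∈ B := hWS (mem_singleton_self w)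
  have hwRS : w ∉ RS := disjoint_singleton_left.mp hdisj
  have hcovered : #(w ∩ RS.sup id) ≤ r * m := hRScard ▸ card_inter_sup_le fun a ha =>
    hinter w hw a (hRS ha) fun hwa => hwRS (hwa ▸ ha)
  rw [inf_singleton, id]
  have := card_sdiff_add_card_inter w (RS.sup id)
  have := hcard w hw
  omega

theorem packing_is_cff_general {X : Type} [Fintype X] [DecidableEq X] (t k d : ℕ)
    (B : Finset (Finset X)) (hpack : IsPacking t k 1 B)
    (hr : 1 ≤ (k - d - 1) / (t - 1)) :
    IsCFF 1 ((k - d - 1) / (t - 1)) d B := by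
  refine isCFF_one_of_card_inter_le hpack.1
    (fun b₁ h₁ b₂ h₂ hne => Nat.le_sub_one_of_lt (hpack.card_inter_lt h₁ h₂ hne)) ?_
  have hkd : 1 ≤ k - d - 1 := hr.trans (Nat.div_le_self _ _)
  have := Nat.div_mul_le_self (k - d - 1) (t - 1)
  omega

/-- A `t-(v,k,1)` packing design with `b` blocks is an `(r;d)`-CFF with ground set size `v`
and `b` blocks, where `r = ⌊(k-d-1)/(t-1)⌋`. -/
theorem packing_is_cff {X : Type} [Fintype X] [DecidableEq X] (t k d v b : ℕ)
    (ht : 2 ≤ t) (hv : Fintype.card X = v)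
    (B : Finset (Finset X)) (hb : B.card = b) (hpack : IsPacking t k 1 B)
    (hr : 1 ≤ (k - d - 1) / (t - 1)) :
    IsCFF 1 ((k - d - 1) / (t - 1)) d B :=
  packing_is_cff_general t k d B hpack hr
end

section
/- For any prime power q and integer t < q, there exists a (⌊(q - d)/(t - 1)⌋; d)-cover-free family with ground set size q² + q and q^t blocks, for any non-negative integer d with ⌊(q-d)/(t-1)⌋ ≥ 1. -/
open Finset Polynomial

section CFFaux

variable {K : Type} [Field K] [Fintype K] [DecidableEq K] {m : ℕ}

/-- value function: `none` column records the leading coefficient. -/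
def gfun (c : Fin (m+2) → K) : Option K → K
  | none => c (Fin.last (m+1))
  | some a => ∑ i : Fin (m+2), c i * a ^ (i : ℕ)

noncomputable def polC (c : Fin (m+2) → K) : K[X] :=
  ∑ i : Fin (m+2), C (c i) * X ^ (i : ℕ)

lemma polC_coeff (c : Fin (m+2) → K) (i : Fin (m+2)) : (polC c).coeff i = c i := by
  rw [polC, finset_sum_coeff]
  rw [Finset.sum_eq_single i]
  · simp
  · intro j _ hj
    simp only [coeff_C_mul, coeff_X_pow]
    rw [if_neg (fun hv => hj (Fin.val_injective hv.symm))]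
    simp
  · simp

lemma polC_eval (c : Fin (m+2) → K) (a : K) : (polC c).eval a = gfun c (some a) := by
  simp only [polC, gfun, eval_finset_sum, eval_mul, eval_C, eval_pow, eval_X]

lemma agree_card_le (c c' : Fin (m+2) → K) (h : c ≠ c') :
    (univ.filter (fun x => gfun c x = gfun c' x)).card ≤ m + 1 := by
  set D : Fin (m+2) → K := fun i => c i - c' i with hD
  have hDne : ∃ i, D i ≠ 0 := by
    by_contra h0
    push_neg at h0
    exact h (funext fun i => by have := h0 i; simp [hD, sub_eq_zero] at this; exact this)
  obtain ⟨i0, hi0⟩ := hDne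
  have hP0 : polC D ≠ 0 := fun hz => hi0 (by rw [← polC_coeff D i0, hz]; simp)
  have hroot : ∀ a : K, gfun c (some a) = gfun c' (some a) → a ∈ (polC D).roots := by
    intro a ha
    rw [mem_roots hP0]
    unfold IsRoot
    rw [polC_eval]
    simp only [gfun, hD, sub_mul, Finset.sum_sub_distrib] at *
    rw [ha]; ring
  by_cases hlast : D (Fin.last (m+1)) = 0
  · have hdeg : (polC D).natDegree ≤ m := by
      apply natDegree_sum_le_of_forall_le
      intro i _
      by_cases hil : i = Fin.last (m+1)
      · subst hil; rw [hlast]; simp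
      · refine le_trans (natDegree_C_mul_le _ _) ?_
        rw [natDegree_X_pow]
        have := Fin.val_lt_last hil
        omega
    have hsub : (univ.filter (fun x => gfun c x = gfun c' x)) ⊆
        insert none ((polC D).roots.toFinset.image some) := by
      intro x hx
      simp only [mem_filter] at hx
      match x with
      | none => simp
      | some a =>
        simp only [mem_insert, mem_image, Multiset.mem_toFinset]
        exact Or.inr ⟨a, hroot a hx.2, rfl⟩
    calc (univ.filter (fun x => gfun c x = gfun c' x)).card
        ≤ (insert none ((polC D).roots.toFinset.image some)).card := card_le_card hsub
      _ ≤ ((polC D).roots.toFinset.image some).card + 1 := card_insert_le _ _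
      _ ≤ (polC D).roots.toFinset.card + 1 := by gcongr; exact card_image_le
      _ ≤ Multiset.card (polC D).roots + 1 := by gcongr; exact Multiset.toFinset_card_le _
      _ ≤ (polC D).natDegree + 1 := by gcongr; exact (polC D).card_roots'
      _ ≤ m + 1 := by omega
  · have hdeg : (polC D).natDegree ≤ m + 1 := by
      apply natDegree_sum_le_of_forall_le
      intro i _
      refine le_trans (natDegree_C_mul_le _ _) ?_
      rw [natDegree_X_pow]
      have := i.isLt
      omega
    have hsub : (univ.filter (fun x => gfun c x = gfun c' x)) ⊆
        (polC D).roots.toFinset.image some := by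
      intro x hx
      simp only [mem_filter] at hx
      match x with
      | none =>
        exfalso
        apply hlast
        simp only [gfun] at hx
        simp [hD, sub_eq_zero, hx.2]
      | some a =>
        simp only [mem_image, Multiset.mem_toFinset]
        exact ⟨a, hroot a hx.2, rfl⟩
    calc (univ.filter (fun x => gfun c x = gfun c' x)).card
        ≤ ((polC D).roots.toFinset.image some).card := card_le_card hsub
      _ ≤ (polC D).roots.toFinset.card := card_image_le
      _ ≤ Multiset.card (polC D).roots := Multiset.toFinset_card_le _
      _ ≤ (polC D).natDegree := (polC D).card_roots'
      _ ≤ m + 1 := hdeg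


/-- block of a polynomial: its graph over `Option K`. -/
def blk (c : Fin (m+2) → K) : Finset (Option K × K) :=
  univ.image (fun x => (x, gfun c x))

lemma mem_blk {c : Fin (m+2) → K} {p : Option K × K} :
    p ∈ blk c ↔ p.2 = gfun c p.1 := by
  constructor
  · rintro hp
    obtain ⟨x, -, rfl⟩ := mem_image.mp hp
    rfl
  · intro hp
    exact mem_image.mpr ⟨p.1, mem_univ _, by cases p; simp_all⟩

lemma blk_card (c : Fin (m+2) → K) : (blk c).card = Fintype.card K + 1 := by
  rw [blk, card_image_of_injective _ (fun x y h => (Prod.mk.injEq _ _ _ _).mp h |>.1)]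
  simp

lemma blk_inter (c c' : Fin (m+2) → K) :
    blk c ∩ blk c' = (univ.filter (fun x => gfun c x = gfun c' x)).image
      (fun x => (x, gfun c x)) := by
  ext ⟨x, y⟩
  simp only [mem_inter, mem_blk, mem_image, mem_filter, mem_univ, true_and]
  constructor
  · rintro ⟨rfl, h2⟩
    exact ⟨x, h2, rfl⟩
  · rintro ⟨a, ha, h⟩
    obtain ⟨rfl, rfl⟩ := Prod.mk.injEq _ _ _ _ |>.mp h
    exact ⟨rfl, ha⟩

lemma blk_inter_card_le (c c' : Fin (m+2) → K) (h : c ≠ c') :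
    (blk c ∩ blk c').card ≤ m + 1 := by
  rw [blk_inter]
  exact le_trans card_image_le (agree_card_le c c' h)

lemma blk_injective (hm : m + 2 ≤ Fintype.card K) :
    Function.Injective (blk (K := K) (m := m)) := by
  intro c c' h
  by_contra hne
  have h1 := blk_inter_card_le c c' hne
  rw [h, inter_self, blk_card] at h1
  omega

end CFFaux

/-- For a prime power `q` and `t < q`, there exists a `(⌊(q-d)/(t-1)⌋; d)`-CFF with
ground set size `q² + q` and `q^t` blocks, provided `⌊(q-d)/(t-1)⌋ ≥ 1`. -/
theorem oa_cff_exists (q t d : ℕ)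
    (hq : ∃ p n : ℕ, p.Prime ∧ 0 < n ∧ q = p ^ n) (htq : t < q)
    (hr : 1 ≤ (q - d) / (t - 1)) :
    ∃ F : Finset (Finset (Fin (q ^ 2 + q))), F.card = q ^ t ∧
      IsCFF 1 ((q - d) / (t - 1)) d F := by
  obtain ⟨p, n, hp, hn, rfl⟩ := hq
  set q := p ^ n with hqdef
  -- t ≥ 2
  obtain _ | _ | m := t
  · simp at hr
  · simp at hr
  -- the field
  haveI : Fact p.Prime := ⟨hp⟩
  letI : Fintype (GaloisField p n) := Fintype.ofFinite _
  letI : DecidableEq (GaloisField p n) := Classical.decEq _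
  set K := GaloisField p n with hK
  have hcard : Fintype.card K = q := by
    rw [← Nat.card_eq_fintype_card, GaloisField.card p n hn.ne']
  -- ground set equivalence
  have hGC : Fintype.card (Option K × K) = q ^ 2 + q := by
    rw [Fintype.card_prod, Fintype.card_option, hcard]
    ring
  let e : Option K × K ≃ Fin (q ^ 2 + q) := Fintype.equivFinOfCardEq hGC
  have hm2 : m + 2 ≤ Fintype.card K := by rw [hcard]; omega
  -- the family
  refine ⟨univ.image (fun c : Fin (m+2) → K => (blk c).map e.toEmbedding), ?_, ?_⟩
  · rw [card_image_of_injective _ (fun c c' h =>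
      blk_injective hm2 (Finset.map_injective e.toEmbedding h))]
    rw [card_univ, Fintype.card_fun, hcard, Fintype.card_fin]
  · intro WS RS hWS hRS hW1 hRr hdisj
    obtain ⟨B, rfl⟩ := Finset.card_eq_one.mp hW1
    rw [Finset.inf_singleton, id]
    have hBF := hWS (mem_singleton_self B)
    obtain ⟨c, -, rfl⟩ := mem_image.mp hBF
    have hBnotR : (blk c).map e.toEmbedding ∉ RS :=
      Finset.disjoint_left.mp hdisj (mem_singleton_self _)
    -- each other block intersects in ≤ m+1 points
    have hAle : ∀ A ∈ RS, ((blk c).map e.toEmbedding ∩ A).card ≤ m + 1 := by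
      intro A hA
      obtain ⟨c', -, rfl⟩ := mem_image.mp (hRS hA)
      have hne : c' ≠ c := by
        rintro rfl
        exact hBnotR hA
      rw [← Finset.map_inter]
      rw [Finset.card_map]
      exact blk_inter_card_le c c' hne.symm
    set B := (blk c).map e.toEmbedding with hB
    set U := RS.sup id with hU
    have hBcard : B.card = q + 1 := by rw [hB, Finset.card_map, blk_card, hcard]
    have hsplit : (B \ U).card + (B ∩ U).card = B.card :=
      Finset.card_sdiff_add_card_inter B U
    have hinter : (B ∩ U).card ≤ RS.card * (m + 1) := by
      have : B ∩ U = RS.biUnion (fun A => B ∩ A) := by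
        rw [hU, Finset.sup_eq_biUnion]
        ext x
        simp only [mem_inter, mem_biUnion, id]
        tauto
      rw [this]
      calc (RS.biUnion (fun A => B ∩ A)).card
          ≤ ∑ A ∈ RS, (B ∩ A).card := Finset.card_biUnion_le
        _ ≤ RS.card * (m + 1) := by
            rw [← smul_eq_mul]
            exact Finset.sum_le_card_nsmul RS _ (m + 1) hAle
    -- arithmetic
    have ht1 : m + 2 - 1 = m + 1 := rfl
    rw [ht1] at hr hRr
    have hdq : m + 1 ≤ q - d := (Nat.one_le_div_iff (Nat.succ_pos m)).mp hr
    have hmul : (q - d) / (m + 1) * (m + 1) ≤ q - d := Nat.div_mul_le_self _ _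
    rw [hRr] at hinter
    omega
end

section
/- Let C be an (N, n, q)-code with minimum Hamming distance D, and let d ≥ 0 with r = ⌊(N - d - 1)/(N - D)⌋ ≥ 1. Then the set system (X, B) with X = {1,...,N} × Q and B_c = {(i, c_i) : 1 ≤ i ≤ N} for each codeword c is an (r; d)-cover-free family with ground set size Nq and n blocks. -/
open Finset

/-- An `(N,n,q)`-code `C` with minimum Hamming distance `D` gives an `(r;d)`-CFF
with ground set `{1,…,N} × Q` (of size `Nq`) and `n` blocks, where
`r = ⌊(N-d-1)/(N-D)⌋ ≥ 1` and the blocks are `B_c = {(i, cᵢ) : 1 ≤ i ≤ N}`. -/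
theorem code_to_cff (N n q D d : ℕ)
    (C : Finset (Fin N → Fin q)) (hn : C.card = n)
    (hD : ∀ c ∈ C, ∀ c' ∈ C, c ≠ c' → D ≤ hammingDist c c')
    (hDmin : ∃ c ∈ C, ∃ c' ∈ C, c ≠ c' ∧ hammingDist c c' = D)
    (hr : 1 ≤ (N - d - 1) / (N - D)) :
    (C.image (fun c => (Finset.univ.image (fun i : Fin N => (i, c i)) :
        Finset (Fin N × Fin q)))).card = n ∧
    IsCFF 1 ((N - d - 1) / (N - D)) d
      (C.image (fun c => (Finset.univ.image (fun i : Fin N => (i, c i)) :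
        Finset (Fin N × Fin q)))) := by
  set B : (Fin N → Fin q) → Finset (Fin N × Fin q) :=
    fun c => Finset.univ.image (fun i : Fin N => (i, c i)) with hBdef
  have hmem : ∀ c (i : Fin N) (x : Fin q), (i, x) ∈ B c ↔ x = c i := by
    intro c i x
    simp only [hBdef, mem_image, mem_univ, true_and, Prod.mk.injEq]
    constructor
    · rintro ⟨j, rfl, rfl⟩; rfl
    · rintro rfl; exact ⟨i, rfl, rfl⟩
  have hBinj : ∀ c c', B c = B c' → c = c' := by
    intro c c' h
    funext i
    have h1 : (i, c i) ∈ B c' := h ▸ ((hmem c i (c i)).mpr rfl)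
    exact (hmem c' i (c i)).mp h1
  have hBcard : ∀ c, (B c).card = N := by
    intro c
    rw [hBdef]
    rw [Finset.card_image_of_injective _ (fun i j h => (Prod.mk.injEq _ _ _ _).mp h |>.1)]
    simp
  have hinter : ∀ c c', c ≠ c' → (B c ∩ B c').card + hammingDist c c' = N := by
    intro c c' hne
    have : B c ∩ B c' = (Finset.univ.filter (fun i => c i = c' i)).image
        (fun i => (i, c i)) := by
      ext ⟨i, x⟩
      simp only [mem_inter, hmem, mem_image, mem_filter, mem_univ, true_and, Prod.mk.injEq]
      constructor
      · rintro ⟨rfl, h2⟩; exact ⟨i, h2, rfl, rfl⟩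
      · rintro ⟨j, hj, rfl, rfl⟩; exact ⟨rfl, hj⟩
    rw [this, Finset.card_image_of_injective _ (fun i j h => (Prod.mk.injEq _ _ _ _).mp h |>.1)]
    have := Finset.card_filter_add_card_filter_not (s := (univ : Finset (Fin N)))
      (p := fun i => c i = c' i)
    simp only [card_univ, Fintype.card_fin] at this
    rw [hammingDist]
    convert this using 2
  constructor
  · rw [Finset.card_image_of_injOn (fun a _ b _ h => hBinj a b h), hn]
  · intro WS RS hWS hRS hW1 hRr hdisj
    obtain ⟨B0, rfl⟩ := card_eq_one.mp hW1
    have hB0F : B0 ∈ C.image B := hWS (mem_singleton_self _)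
    obtain ⟨c0, hc0C, hc0⟩ := mem_image.mp hB0F
    have hND : 0 < N - D := by
      rcases Nat.eq_zero_or_pos (N - D) with h | h
      · rw [h, Nat.div_zero] at hr; omega
      · exact h
    have hkey : ((N - d - 1) / (N - D)) * (N - D) ≤ N - d - 1 := Nat.div_mul_le_self _ _
    have hNd2 : N - D ≤ N - d - 1 := by
      have := (Nat.le_div_iff_mul_le hND).mp hr
      omega
    -- bound on intersection with sup
    have hsup : (B0 ∩ RS.sup id).card ≤ RS.card * (N - D) := by
      have h1 : B0 ∩ RS.sup id ⊆ RS.biUnion (fun A => B0 ∩ A) := by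
        intro x hx
        rw [mem_inter, Finset.sup_eq_biUnion, mem_biUnion] at hx
        obtain ⟨hx1, A, hA, hx2⟩ := hx
        exact mem_biUnion.mpr ⟨A, hA, mem_inter.mpr ⟨hx1, hx2⟩⟩
      calc (B0 ∩ RS.sup id).card ≤ (RS.biUnion (fun A => B0 ∩ A)).card :=
            card_le_card h1
        _ ≤ ∑ A ∈ RS, (B0 ∩ A).card := card_biUnion_le
        _ ≤ ∑ _A ∈ RS, (N - D) := by
            apply Finset.sum_le_sum
            intro A hA
            obtain ⟨c', hc'C, hc'⟩ := mem_image.mp (hRS hA)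
            have hne : c' ≠ c0 := by
              rintro rfl
              exact (Finset.disjoint_singleton_left.mp hdisj) (hc0 ▸ hc' ▸ hA)
            have := hinter c0 c' (fun h => hne h.symm)
            have hd := hD c0 hc0C c' hc'C (fun h => hne h.symm)
            rw [← hc0, ← hc']
            rw [Finset.inter_comm] at this ⊢
            omega
        _ = RS.card * (N - D) := by rw [Finset.sum_const, smul_eq_mul]
    rw [hRr] at hsup
    have hcard := Finset.card_inter_add_card_sdiff B0 (RS.sup id)
    rw [Finset.inf_singleton, id]
    have hB0N : B0.card = N := hc0 ▸ hBcard c0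
    omega
end

section
/- Let T, w, r be positive integers and p = 1 - w^w r^r / (w+r)^{w+r}. If N > (w+r) log T / (−log p), then there exists a (w,r)-cover-free family with ground set size N and T blocks. -/
/-! Color every incidence (point, block) independently and uniformly with one of `w + r` colors,
and put the point in the block when its color lies in a fixed set of `w` colors. A point then
separates a given disjoint pair `(W, R)` of `w` and `r` blocks (lies in every block of `W` and in
no block of `R`) with probability `q = (w/(w+r))^w (r/(w+r))^r = w^w r^r/(w+r)^(w+r)`,
independently over the `N` points, so no point separates `(W, R)` with probability `p^N`,
`p = 1 - q`. There are at most `T^(w+r)` pairs, and the hypothesis on `N` is exactly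
`T^(w+r) p^N < 1`, so some coloring separates every pair; its blocks are then distinct and form
the cover-free family. When `T < w + r` the cover-free condition is vacuous and only `T ≤ 2^N`
is needed, which holds since `p ≥ 3/4`. -/

open Finset Real

section Separating

variable {X ι : Type*}

def Separating (w r : ℕ) (B : ι → Finset X) : Prop :=
  ∀ W R : Finset ι, W.card = w → R.card = r → Disjoint W R →
    ∃ x, (∀ i ∈ W, x ∈ B i) ∧ ∀ j ∈ R, x ∉ B j

lemma exists_disjoint_card_eq_of_mem [Fintype ι] [DecidableEq ι] {i j : ι} (hij : i ≠ j)
    {w r : ℕ} (hw : 0 < w) (hr : 0 < r) (h : w + r ≤ Fintype.card ι) :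
    ∃ W R : Finset ι, i ∈ W ∧ j ∈ R ∧ W.card = w ∧ R.card = r ∧ Disjoint W R := by
  obtain ⟨W, hiW, hWj, hW⟩ := exists_subsuperset_card_eq (s := {i}) (t := {j}ᶜ) (n := w)
    (by simpa using hij.symm) ((card_singleton i).trans_le hw)
    (by rw [card_compl, card_singleton]; omega)
  have hjW : j ∉ W := fun hj => mem_compl.1 (hWj hj) (mem_singleton_self j)
  obtain ⟨R, hjR, hRW, hR⟩ := exists_subsuperset_card_eq (s := {j}) (t := Wᶜ) (n := r)
    (by simpa using hjW) ((card_singleton j).trans_le hr) (by rw [card_compl, hW]; omega)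
  exact ⟨W, R, hiW (mem_singleton_self i), hjR (mem_singleton_self j), hW, hR,
    disjoint_of_subset_right hRW disjoint_compl_right⟩

lemma Separating.injective [Fintype ι] {w r : ℕ} {B : ι → Finset X} (hB : Separating w r B)
    (hw : 0 < w) (hr : 0 < r) (h : w + r ≤ Fintype.card ι) : Function.Injective B := by
  classical
  intro i j hij
  by_contra hne
  obtain ⟨W, R, hiW, hjR, hW, hR, hWR⟩ := exists_disjoint_card_eq_of_mem hne hw hr h
  obtain ⟨x, hxW, hxR⟩ := hB W R hW hR hWR
  exact hxR j hjR (hij ▸ hxW i hiW)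

end Separating

section CoverFree

variable {X : Type} {ι : Type*} [Fintype X] [DecidableEq X]

lemma isCFF_of_card_lt {w r d : ℕ} {F : Finset (Finset X)} (hF : F.card < w + r) :
    IsCFF w r d F := by
  intro WS RS hWS hRS hW hR hWR
  have := card_le_card (union_subset hWS hRS)
  rw [card_union_of_disjoint hWR, hW, hR] at this
  omega

lemma Separating.isCFF_image [Fintype ι] {w r : ℕ} {B : ι → Finset X} (hB : Separating w r B)
    (hinj : Function.Injective B) : IsCFF w r 0 (univ.image B) := by
  classical
  intro WS RS hWS hRS hW hR hWR
  obtain ⟨W, -, rfl⟩ := subset_image_iff.1 hWS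
  obtain ⟨R, -, rfl⟩ := subset_image_iff.1 hRS
  rw [card_image_of_injective _ hinj] at hW hR
  obtain ⟨x, hxW, hxR⟩ := hB W R hW hR ((disjoint_image hinj).1 hWR)
  refine card_pos.2 ⟨x, mem_sdiff.2 ⟨?_, ?_⟩⟩
  · rw [inf_image, mem_inf]
    exact hxW
  · rw [sup_image, mem_sup]
    rintro ⟨j, hj, hxj⟩
    exact hxR j hj hxj

end CoverFree

section Counting

variable {ι C : Type*} [Fintype ι] [DecidableEq ι] [Fintype C] [DecidableEq C]

lemma exists_forall_notMem_of_sum_card_lt {Ω α : Type*} [Fintype Ω]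
    (P : Finset α) (E : α → Finset Ω) (h : ∑ p ∈ P, (E p).card < Fintype.card Ω) :
    ∃ ω, ∀ p ∈ P, ω ∉ E p := by
  classical
  by_contra! hcover
  have : (univ : Finset Ω) ⊆ P.biUnion E := fun ω _ => mem_biUnion.2 (hcover ω)
  exact (card_le_card this |>.trans card_biUnion_le).not_gt h

def separatingColorings (S : Finset C) (W R : Finset ι) : Finset (ι → C) :=
  Fintype.piFinset fun i => if i ∈ W then S else if i ∈ R then Sᶜ else univ

lemma mem_separatingColorings {S : Finset C} {W R : Finset ι} (hWR : Disjoint W R) {v : ι → C} :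
    v ∈ separatingColorings S W R ↔ (∀ i ∈ W, v i ∈ S) ∧ ∀ j ∈ R, v j ∉ S := by
  simp only [separatingColorings, Fintype.mem_piFinset]
  constructor
  · intro h
    refine ⟨fun i hi => by simpa [hi] using h i, fun j hj => ?_⟩
    simpa [hj, disjoint_right.1 hWR hj] using h j
  · rintro ⟨hW, hR⟩ i
    split_ifs with hiW hiR
    exacts [hW i hiW, mem_compl.2 (hR i hiR), mem_univ _]

lemma card_separatingColorings_div [Nonempty C] (S : Finset C) {W R : Finset ι} (hWR : Disjoint W R) :
    ((separatingColorings S W R).card : ℝ) / Fintype.card C ^ Fintype.card ι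
      = (S.card / Fintype.card C : ℝ) ^ W.card * (Sᶜ.card / Fintype.card C : ℝ) ^ R.card := by
  have hC : (Fintype.card C : ℝ) ≠ 0 := by positivity
  have hcol : ∀ i, (((if i ∈ W then S else if i ∈ R then Sᶜ else univ).card : ℕ) : ℝ)
      / Fintype.card C = (if i ∈ W then (S.card / Fintype.card C : ℝ) else 1)
        * (if i ∈ R then (Sᶜ.card / Fintype.card C : ℝ) else 1) := by
    intro i
    by_cases hiW : i ∈ W
    · simp [hiW, disjoint_left.1 hWR hiW]
    · by_cases hiR : i ∈ R <;> simp [hiW, hiR, hC]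
  have hpow : (Fintype.card C : ℝ) ^ Fintype.card ι = ∏ _i : ι, (Fintype.card C : ℝ) := by
    rw [prod_const, card_univ]
  rw [separatingColorings, Fintype.card_piFinset, Nat.cast_prod, hpow, ← prod_div_distrib,
    prod_congr rfl fun i _ => hcol i, prod_mul_distrib, prod_ite_mem, prod_ite_mem, univ_inter,
    univ_inter, prod_const, prod_const]

lemma card_piFinset_compl_separatingColorings (X : Type*) [Fintype X] [DecidableEq X] [Nonempty C]
    (S : Finset C) {W R : Finset ι} (hWR : Disjoint W R) :
    ((Fintype.piFinset fun _ : X => (separatingColorings S W R)ᶜ).card : ℝ)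
      = Fintype.card (X → ι → C) * (1 - (S.card / Fintype.card C : ℝ) ^ W.card
          * (Sᶜ.card / Fintype.card C : ℝ) ^ R.card) ^ Fintype.card X := by
  have hC : (Fintype.card C : ℝ) ^ Fintype.card ι ≠ 0 := by positivity
  have hgood := card_separatingColorings_div S hWR
  rw [div_eq_iff hC] at hgood
  rw [Fintype.card_piFinset, prod_const, card_univ, card_compl, Nat.cast_pow,
    Nat.cast_sub (card_le_univ _), hgood]
  simp only [Fintype.card_pi, prod_const, card_univ, Nat.cast_pow]
  rw [← mul_pow]
  ring

def disjointPairs (w r : ℕ) : Finset (Finset ι × Finset ι) :=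
  (powersetCard w univ ×ˢ powersetCard r univ).filter fun p => Disjoint p.1 p.2

lemma mem_disjointPairs {w r : ℕ} {W R : Finset ι} :
    (W, R) ∈ disjointPairs w r ↔ W.card = w ∧ R.card = r ∧ Disjoint W R := by
  simp [disjointPairs, and_assoc]

lemma card_disjointPairs_le (w r : ℕ) :
    (disjointPairs (ι := ι) w r).card ≤ Fintype.card ι ^ (w + r) := by
  refine (card_filter_le _ _).trans ?_
  rw [card_product, card_powersetCard, card_powersetCard, card_univ, pow_add]
  exact Nat.mul_le_mul (Nat.choose_le_pow _ _) (Nat.choose_le_pow _ _)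

def blocksOf {X : Type*} [Fintype X] (ω : X → ι → C) (S : Finset C) (i : ι) : Finset X :=
  univ.filter fun x => ω x i ∈ S

lemma exists_separating_blocksOf {X : Type*} [Fintype X] [Nonempty C] (S : Finset C) {w r : ℕ}
    (h : (Fintype.card ι : ℝ) ^ (w + r) * (1 - (S.card / Fintype.card C : ℝ) ^ w
      * (Sᶜ.card / Fintype.card C : ℝ) ^ r) ^ Fintype.card X < 1) :
    ∃ ω : X → ι → C, Separating w r (blocksOf ω S) := by
  classical
  set q := (S.card / Fintype.card C : ℝ) ^ w * (Sᶜ.card / Fintype.card C : ℝ) ^ r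
  set Ω := Fintype.card (X → ι → C)
  have hq : q ≤ 1 := by
    have hfrac (s : Finset C) : (s.card / Fintype.card C : ℝ) ≤ 1 :=
      div_le_one_of_le₀ (by exact_mod_cast card_le_univ s) (by positivity)
    exact mul_le_one₀ (pow_le_one₀ (by positivity) (hfrac S)) (by positivity)
      (pow_le_one₀ (by positivity) (hfrac Sᶜ))
  have hΩ : (0 : ℝ) < Ω := Nat.cast_pos.2 Fintype.card_pos
  let bad (p : Finset ι × Finset ι) : Finset (X → ι → C) :=
    Fintype.piFinset fun _ => (separatingColorings S p.1 p.2)ᶜ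
  have hbad :
      ∀ p ∈ disjointPairs w r, ((bad p).card : ℝ) = Ω * (1 - q) ^ Fintype.card X := by
    rintro ⟨W, R⟩ hp
    obtain ⟨hW, hR, hWR⟩ := mem_disjointPairs.1 hp
    rw [card_piFinset_compl_separatingColorings X S hWR, hW, hR]
  have hunion : (∑ p ∈ disjointPairs w r, (bad p).card : ℝ) < Ω := calc
    (∑ p ∈ disjointPairs w r, (bad p).card : ℝ)
        = (disjointPairs w r).card * (Ω * (1 - q) ^ Fintype.card X) := by
      rw [sum_congr rfl hbad, sum_const, nsmul_eq_mul]
    _ ≤ Fintype.card ι ^ (w + r) * (Ω * (1 - q) ^ Fintype.card X) := by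
      have := pow_nonneg (sub_nonneg.2 hq) (Fintype.card X)
      gcongr
      exact_mod_cast card_disjointPairs_le w r
    _ < Ω := by nlinarith
  obtain ⟨ω, hω⟩ := exists_forall_notMem_of_sum_card_lt _ bad (by exact_mod_cast hunion)
  refine ⟨ω, fun W R hW hR hWR => ?_⟩
  have hsep := hω (W, R) (mem_disjointPairs.2 ⟨hW, hR, hWR⟩)
  simp only [bad, Fintype.mem_piFinset, mem_compl, not_forall, not_not,
    mem_separatingColorings hWR] at hsep
  simpa [blocksOf] using hsep

end Counting

lemma pow_mul_pow_lt_one_of_lt_div_neg_logb {b x p : ℝ} {s N : ℕ} (hb : 1 < b) (hx : 0 < x)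
    (hp0 : 0 < p) (hp1 : p < 1) (h : s * logb b x / -logb b p < N) : x ^ s * p ^ N < 1 := by
  rw [div_lt_iff₀ (neg_pos.2 (logb_neg hb hp0 hp1))] at h
  rw [← logb_neg_iff hb (by positivity), logb_mul (by positivity) (by positivity), logb_pow,
    logb_pow]
  linarith

lemma pow_mul_pow_le_quarter {x y : ℝ} {m n : ℕ} (hx : 0 ≤ x) (hy : 0 ≤ y) (hxy : x + y = 1)
    (hm : m ≠ 0) (hn : n ≠ 0) : x ^ m * y ^ n ≤ 1 / 4 := calc
  x ^ m * y ^ n ≤ x * y :=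
    mul_le_mul (pow_le_of_le_one hx (by linarith) hm) (pow_le_of_le_one hy (by linarith) hn)
      (by positivity) hx
  _ ≤ 1 / 4 := by nlinarith [sq_nonneg (x - y)]

lemma lt_two_pow_of_pow_mul_pow_lt_one {x p : ℝ} {s N : ℕ} (hx : 1 ≤ x) (hs : s ≠ 0)
    (hp : 1 / 2 ≤ p) (h : x ^ s * p ^ N < 1) : x < 2 ^ N := by
  have : x ^ s * (2 ^ N)⁻¹ < 1 := calc
    x ^ s * (2 ^ N)⁻¹ = x ^ s * (1 / 2) ^ N := by rw [one_div, inv_pow]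
    _ ≤ x ^ s * p ^ N := by gcongr
    _ < 1 := h
  calc x ≤ x ^ s := le_self_pow₀ hx hs
    _ < 2 ^ N := by rwa [mul_inv_lt_iff₀ (by positivity), one_mul] at this

/-- Probabilistic existence: with `p = 1 - w^w r^r/(w+r)^{w+r}`, if
`N > (w+r) log₂ T / (-log₂ p)`, then a `(w,r)`-CFF(N,T) exists. -/
theorem prob_cff_exists (w r N T : ℕ) (hw : 0 < w) (hr : 0 < r) (hT : 0 < T)
    (hN : (N : ℝ) >
      ((w + r : ℝ) * Real.logb 2 T) /
        (-Real.logb 2 (1 - (w : ℝ) ^ w * (r : ℝ) ^ r / ((w : ℝ) + r) ^ (w + r)))) :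
    ∃ F : Finset (Finset (Fin N)), F.card = T ∧ IsCFF w r 0 F := by
  set x : ℝ := w / (w + r)
  set y : ℝ := r / (w + r)
  have hq : (w : ℝ) ^ w * r ^ r / (w + r) ^ (w + r) = x ^ w * y ^ r := by
    rw [div_pow, div_pow, pow_add]; ring
  have hq0 : 0 < x ^ w * y ^ r := by positivity
  have hxy : x + y = 1 := by rw [← add_div, div_self (by positivity)]
  have hq4 : x ^ w * y ^ r ≤ 1 / 4 :=
    pow_mul_pow_le_quarter (by positivity) (by positivity) hxy hw.ne' hr.ne'
  have hbound : (T : ℝ) ^ (w + r) * (1 - x ^ w * y ^ r) ^ N < 1 :=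
    pow_mul_pow_lt_one_of_lt_div_neg_logb one_lt_two (by positivity) (by linarith) (by linarith)
      (by rw [← hq]; exact_mod_cast hN)
  by_cases hTwr : w + r ≤ T
  · have : NeZero (w + r) := ⟨by omega⟩
    obtain ⟨S, -, hS⟩ := exists_subset_card_eq (s := (univ : Finset (Fin (w + r)))) (n := w)
      (by simp)
    obtain ⟨ω, hω⟩ := exists_separating_blocksOf (X := Fin N) (ι := Fin T) S (w := w)
      (r := r) (by simpa [card_compl, hS, x, y] using hbound)
    have hinj := hω.injective hw hr (by simpa using hTwr)
    exact ⟨_, (card_image_of_injective _ hinj).trans (card_fin T), hω.isCFF_image hinj⟩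
  · have hT2 : T < 2 ^ N := by
      exact_mod_cast lt_two_pow_of_pow_mul_pow_lt_one (by exact_mod_cast hT) (by omega)
        (by linarith) hbound
    obtain ⟨F, -, hF⟩ := exists_superset_card_eq (s := (∅ : Finset (Finset (Fin N)))) (n := T)
      (by simp) (by simpa using hT2.le)
    exact ⟨F, hF, isCFF_of_card_lt (by omega)⟩
end

section
/- If (X, F) is an (r; d)-CFF and F₀, F₁, ..., F_r are r+1 distinct blocks of F each satisfying: for all 0 ≤ i ≤ r and any i blocks G₁,...,G_i ∈ F distinct from the given block, |F_j \ (G₁ ∪ ... ∪ G_i)| > t(r-i) + d, then |F₀ ∪ F₁ ∪ ... ∪ F_r| ≥ t·r(r+1)/2 + (d+1)(r+1). -/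
/-!
Add the blocks to the union in the order `F₀, F₁, …, F_r`. Applied to `F_j` and the `j` blocks
before it, the hypothesis says that `F_j` contributes at least `t(r-j) + d + 1` new points, and
`∑_{j ≤ r} (t(r-j) + d + 1) = t·r(r+1)/2 + (d+1)(r+1)`.
-/

open Finset

theorem sum_le_card_sup_of_le_card_sdiff {ι α : Type*} [LinearOrder ι] [DecidableEq α]
    (s : Finset ι) (g : ι → Finset α) (a : ι → ℕ)
    (h : ∀ i ∈ s, a i ≤ #(g i \ {j ∈ s | j < i}.sup g)) :
    ∑ i ∈ s, a i ≤ #(s.sup g) := by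
  induction s using Finset.induction_on_max with
  | empty => simp
  | insert m s hlt ih =>
    have hm : m ∉ s := fun hm => (hlt m hm).false
    have hbefore : {j ∈ insert m s | j < m} = s := by
      rw [filter_insert, if_neg (lt_irrefl m), filter_true_of_mem hlt]
    have hnew : a m ≤ #(g m \ s.sup g) := by
      simpa [hbefore] using h m (mem_insert_self m s)
    have hold : ∑ i ∈ s, a i ≤ #(s.sup g) := ih fun i hi => by
      have hfilter : {j ∈ insert m s | j < i} = {j ∈ s | j < i} := by
        rw [filter_insert, if_neg (hlt i hi).not_gt]
      simpa [hfilter] using h i (mem_insert_of_mem hi)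
    calc ∑ i ∈ insert m s, a i = a m + ∑ i ∈ s, a i := sum_insert hm
      _ ≤ #(g m \ s.sup g) + #(s.sup g) := add_le_add hnew hold
      _ = #((insert m s).sup g) := by rw [card_sdiff_add_card, sup_insert, sup_eq_union]

theorem two_mul_sum_range_tsub (r : ℕ) : 2 * ∑ j ∈ range (r + 1), (r - j) = r * (r + 1) := by
  have hreflect := sum_range_reflect id (r + 1)
  simp only [id, Nat.add_sub_cancel] at hreflect
  rw [hreflect, mul_comm, sum_range_id_mul_two, Nat.add_sub_cancel, mul_comm]

theorem sum_fin_tsub_add (r t c : ℕ) :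
    ∑ j : Fin (r + 1), (t * (r - j) + c) = t * r * (r + 1) / 2 + c * (r + 1) := by
  have hgauss := two_mul_sum_range_tsub r
  rw [Fin.sum_univ_eq_sum_range (fun j => t * (r - j) + c), sum_add_distrib, ← mul_sum,
    sum_const, card_range, smul_eq_mul, mul_comm (r + 1) c, mul_assoc,
    ← hgauss, mul_left_comm, Nat.mul_div_cancel_left _ two_pos]

theorem cff_union_lower_bound_general {X : Type} [DecidableEq X] (r d t : ℕ)
    (F : Finset (Finset X))
    (f : Fin (r + 1) → Finset X) (hinj : Function.Injective f)
    (hmem : ∀ j, f j ∈ F)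
    (hkey : ∀ j : Fin (r + 1), ∀ i ≤ r, ∀ S : Finset (Finset X),
      S ⊆ F.erase (f j) → S.card = i → t * (r - i) + d < (f j \ S.sup id).card) :
    t * r * (r + 1) / 2 + (d + 1) * (r + 1) ≤ (Finset.univ.sup f).card := by
  rw [← sum_fin_tsub_add]
  refine sum_le_card_sup_of_le_card_sdiff (univ : Finset (Fin (r + 1))) f _ fun j _ => ?_
  set S := (Iio j).image f
  have hS : S ⊆ F.erase (f j) := by
    simp only [S, image_subset_iff, mem_erase, mem_Iio]
    exact fun i hij => ⟨hinj.ne hij.ne, hmem i⟩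
  have hcard : #S = j := by rw [card_image_of_injective _ hinj, Fin.card_Iio]
  have hsup : S.sup id = (Iio j).sup f := sup_image _ _ _
  have hnew := hkey j j (Nat.lt_succ_iff.mp j.is_lt) S hS hcard
  rw [filter_gt_eq_Iio, ← hsup]
  omega

/-- If `F₀,…,F_r` are `r+1` distinct blocks of an `(r;d)`-CFF each satisfying
`|F_j \ (G₁ ∪ … ∪ G_i)| > t(r-i) + d` for any `i ≤ r` other blocks `G₁,…,G_i`,
then `|F₀ ∪ … ∪ F_r| ≥ t·r(r+1)/2 + (d+1)(r+1)`. -/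
theorem cff_union_lower_bound {X : Type} [Fintype X] [DecidableEq X] (r d t : ℕ)
    (ht : 0 < t) (F : Finset (Finset X)) (hcff : IsCFF 1 r d F)
    (f : Fin (r + 1) → Finset X) (hinj : Function.Injective f)
    (hmem : ∀ j, f j ∈ F)
    (hkey : ∀ j : Fin (r + 1), ∀ i ≤ r, ∀ S : Finset (Finset X),
      S ⊆ F.erase (f j) → S.card = i → t * (r - i) + d < (f j \ S.sup id).card) :
    t * r * (r + 1) / 2 + (d + 1) * (r + 1) ≤ (Finset.univ.sup f).card :=
  cff_union_lower_bound_general r d t F f hinj hmem hkey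
end
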